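/- arXiv:2407.03375 — 2 statements merged into one kernel-verified Lean document; each statement's English description precedes it below -/
import Mathlib

section
/- For a factorized interaction kernel ω(c,c₁,c₂) = ω₁(c)ω₂(c₁)ω₃(c₂), the eigenvalue problem of the linearization at p ≡ 1/2 has no negative eigenvalue with a positive eigenfunction. Precisely: suppose ω₁, ω₂, ω₃ : (0,∞) → ℝ are measurable and strictly positive μ-a.e., ω₂ and ω₃ are μ-integrable, k ∈ L¹(μ) with k > 0 μ-a.e. and ω₂·k ∈ L¹(μ), λ < 0, and with Γ(c) := ω₁(c)·(∫₀^∞ ω₂ dμ)·(∫₀^∞ ω₃ dμ) one has λ + Γ(c)/2 > 0 for μ-a.e. c and k(c)·(λ + Γ(c)/2) = ω₁(c)·(∫₀^∞ ω₂(c₁)k(c₁) dμ(c₁))·(∫₀^∞ ω₃(c₂) dμ(c₂)) for μ-a.e. c. Then a contradiction follows (no such λ and k can exist). -/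
/-!
With `A = ∫ ω₂ dμ`, `B = ∫ ω₃ dμ` and `K = ∫ ω₂ k dμ`, all positive, the eigenvalue equation and
`λ < 0` give `k(c) ω₁(c) A B / 2 > ω₁(c) K B`, i.e. `k > 2K / A` a.e. Averaging `k` against the
weight `ω₂` then yields `K ≥ 2K`, which is impossible for `K > 0`.
-/

open MeasureTheory Set

noncomputable def netMeasure (g : ℝ → ℝ) : Measure ℝ :=
  (volume.restrict (Ioi (0:ℝ))).withDensity (fun c => ENNReal.ofReal (g c))

section

variable {α : Type*} [MeasurableSpace α] {μ : Measure α}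

theorem withDensity_ofReal_ne_zero_of_integral_pos {f : α → ℝ} (hf : 0 < ∫ x, f x ∂μ) :
    μ.withDensity (fun x => ENNReal.ofReal (f x)) ≠ 0 := by
  intro h
  have hfi : Integrable f μ := Integrable.of_integral_ne_zero hf.ne'
  rw [withDensity_eq_zero_iff hfi.aemeasurable.ennreal_ofReal] at h
  have hf_nonpos : f ≤ᵐ[μ] 0 := h.mono fun _ hx => ENNReal.ofReal_eq_zero.1 hx
  exact (integral_nonpos_of_ae hf_nonpos).not_gt hf

theorem integral_pos_of_ae_pos (hμ : μ ≠ 0) {f : α → ℝ} (hf : Integrable f μ)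
    (hf_pos : ∀ᵐ x ∂μ, 0 < f x) : 0 < ∫ x, f x ∂μ := by
  rw [integral_pos_iff_support_of_nonneg_ae (hf_pos.mono fun _ hx => hx.le) hf, pos_iff_ne_zero]
  intro h_support
  have hf_zero : ∀ᵐ x ∂μ, f x = 0 := μ.measure_support_eq_zero_iff.1 h_support
  have h_false : ∀ᵐ _ ∂μ, False := (hf_pos.and hf_zero).mono fun _ hx => hx.1.ne' hx.2
  exact hμ (ae_eq_bot.1 (Filter.eventually_false_iff_eq_bot.1 h_false))

theorem const_mul_integral_le_integral_mul {w f : α → ℝ} {m : ℝ} (hw : Integrable w μ)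
    (hwf : Integrable (fun x => w x * f x) μ) (hw_nonneg : ∀ᵐ x ∂μ, 0 ≤ w x)
    (hf : ∀ᵐ x ∂μ, m ≤ f x) : m * ∫ x, w x ∂μ ≤ ∫ x, w x * f x ∂μ := by
  rw [← integral_const_mul]
  refine integral_mono_ae (hw.const_mul m) hwf ?_
  filter_upwards [hw_nonneg, hf] with x hwx hfx
  rw [mul_comm]
  exact mul_le_mul_of_nonneg_left hfx hwx

end

theorem lt_of_factorized_eigen_eq {w a b k K lam : ℝ} (hw : 0 < w) (ha : 0 < a) (hb : 0 < b)
    (hk : 0 < k) (hlam : lam < 0) (h : k * (lam + w * a * b / 2) = w * K * b) :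
    2 * K / a < k := by
  rw [div_lt_iff₀ ha]
  nlinarith [mul_pos hw hb, mul_pos hk (mul_pos hw hb)]

theorem factorized_kernel_no_negative_eigenvalue_general
    (g : ℝ → ℝ)
    (hg_prob : ∫ c in Ioi (0:ℝ), g c = 1)
    (ω₁ ω₂ ω₃ : ℝ → ℝ)
    (hω₁_pos : ∀ᵐ c ∂(netMeasure g), 0 < ω₁ c)
    (hω₂_pos : ∀ᵐ c ∂(netMeasure g), 0 < ω₂ c)
    (hω₃_pos : ∀ᵐ c ∂(netMeasure g), 0 < ω₃ c)
    (hω₂_int : Integrable ω₂ (netMeasure g))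
    (hω₃_int : Integrable ω₃ (netMeasure g))
    (k : ℝ → ℝ)
    (hk_pos : ∀ᵐ c ∂(netMeasure g), 0 < k c)
    (hω₂k_int : Integrable (fun c => ω₂ c * k c) (netMeasure g))
    (lam : ℝ) (hlam : lam < 0)
    (heig : ∀ᵐ c ∂(netMeasure g),
      k c * (lam + ω₁ c * (∫ c₁, ω₂ c₁ ∂(netMeasure g)) * (∫ c₂, ω₃ c₂ ∂(netMeasure g)) / 2)
        = ω₁ c * (∫ c₁, ω₂ c₁ * k c₁ ∂(netMeasure g)) * (∫ c₂, ω₃ c₂ ∂(netMeasure g))) :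
    False := by
  set μ := netMeasure g
  have hμ : μ ≠ 0 := withDensity_ofReal_ne_zero_of_integral_pos (hg_prob ▸ one_pos)
  set A := ∫ c, ω₂ c ∂μ
  set K := ∫ c, ω₂ c * k c ∂μ
  have hA : 0 < A := integral_pos_of_ae_pos hμ hω₂_int hω₂_pos
  have hB : 0 < ∫ c, ω₃ c ∂μ := integral_pos_of_ae_pos hμ hω₃_int hω₃_pos
  have hK : 0 < K := integral_pos_of_ae_pos hμ hω₂k_int
    ((hω₂_pos.and hk_pos).mono fun _ h => mul_pos h.1 h.2)
  have hk_lower : ∀ᵐ c ∂μ, 2 * K / A ≤ k c := by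
    filter_upwards [hω₁_pos, hk_pos, heig] with c hω₁c hkc heig_c
    exact (lt_of_factorized_eigen_eq hω₁c hA hB hkc hlam heig_c).le
  have h_mean := const_mul_integral_le_integral_mul hω₂_int hω₂k_int
    (hω₂_pos.mono fun _ h => h.le) hk_lower
  rw [div_mul_cancel₀ _ hA.ne'] at h_mean
  linarith

/-- For a factorized kernel `ω(c,c₁,c₂) = ω₁(c)ω₂(c₁)ω₃(c₂)`, the eigenvalue problem of the
linearization at `p ≡ 1/2` has no negative eigenvalue `λ` with a positive eigenfunction `k`. -/
theorem factorized_kernel_no_negative_eigenvalue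
    (g : ℝ → ℝ) (hg_meas : Measurable g) (hg_nonneg : ∀ c, 0 ≤ g c)
    (hg_prob : ∫ c in Ioi (0:ℝ), g c = 1)
    (ω₁ ω₂ ω₃ : ℝ → ℝ)
    (hω₁_meas : Measurable ω₁) (hω₂_meas : Measurable ω₂) (hω₃_meas : Measurable ω₃)
    (hω₁_pos : ∀ᵐ c ∂(netMeasure g), 0 < ω₁ c)
    (hω₂_pos : ∀ᵐ c ∂(netMeasure g), 0 < ω₂ c)
    (hω₃_pos : ∀ᵐ c ∂(netMeasure g), 0 < ω₃ c)
    (hω₂_int : Integrable ω₂ (netMeasure g))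
    (hω₃_int : Integrable ω₃ (netMeasure g))
    (k : ℝ → ℝ) (hk_int : Integrable k (netMeasure g))
    (hk_pos : ∀ᵐ c ∂(netMeasure g), 0 < k c)
    (hω₂k_int : Integrable (fun c => ω₂ c * k c) (netMeasure g))
    (lam : ℝ) (hlam : lam < 0)
    (hpos : ∀ᵐ c ∂(netMeasure g),
      0 < lam + ω₁ c * (∫ c₁, ω₂ c₁ ∂(netMeasure g)) * (∫ c₂, ω₃ c₂ ∂(netMeasure g)) / 2)
    (heig : ∀ᵐ c ∂(netMeasure g),
      k c * (lam + ω₁ c * (∫ c₁, ω₂ c₁ ∂(netMeasure g)) * (∫ c₂, ω₃ c₂ ∂(netMeasure g)) / 2)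
        = ω₁ c * (∫ c₁, ω₂ c₁ * k c₁ ∂(netMeasure g)) * (∫ c₂, ω₃ c₂ ∂(netMeasure g))) :
    False :=
  factorized_kernel_no_negative_eigenvalue_general g hg_prob ω₁ ω₂ ω₃ hω₁_pos hω₂_pos hω₃_pos
    hω₂_int hω₃_int k hk_pos hω₂k_int lam hlam heig
end

section
/- General Relative Entropy dissipation inequality: let n, m ∈ L^∞(μ) with n ≥ 0 and m ≥ 0 satisfy Γ_B(c) n(c) = T_B n(c) and Γ_B(c) m(c) = T_B* m(c) for μ-a.e. c, let H : ℝ → ℝ be convex and differentiable, and let u : (0,∞) → ℝ be bounded and measurable. Then ∫₀^∞ ∫₀^∞ B(c,c₁) m(c) n(c₁) H′(u(c)) (u(c₁) − u(c)) dμ(c₁) dμ(c) ≤ 0. (This is the entropy dissipation term in the General Relative Entropy identity: the entropy ∫ m n H(h/n) dμ is nonincreasing along solutions of the linear scattering equation.) -/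
/-!
By convexity, `H'(u c) (u c₁ - u c) ≤ H(u c₁) - H(u c)`, so against the nonnegative weight
`w(c, c₁) = B(c, c₁) m(c) n(c₁)` the dissipation term is at most
`∫∫ w(c, c₁) (H(u c₁) - H(u c))`. The eigenfunction equations say that both marginals of `w`
equal `Γ_B m n`, and for a weight with equal marginals the integral of any difference
`φ(c₁) - φ(c)` vanishes by Fubini.
-/

open MeasureTheory Set

/-- `Γ_B(c) := ∫₀^∞ B(c,c₁) g(c₁) dc₁`. -/
noncomputable def GamB (B : ℝ → ℝ → ℝ) (g : ℝ → ℝ) (c : ℝ) : ℝ :=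
  ∫ c₁ in Ioi (0:ℝ), B c c₁ * g c₁

/-- `T_B h(c) := ∫₀^∞ B(c,c₁) h(c₁) g(c₁) dc₁`. -/
noncomputable def TB (B : ℝ → ℝ → ℝ) (g : ℝ → ℝ) (h : ℝ → ℝ) (c : ℝ) : ℝ :=
  ∫ c₁ in Ioi (0:ℝ), B c c₁ * h c₁ * g c₁

/-- `T_B* m(c) := ∫₀^∞ B(c₁,c) m(c₁) g(c₁) dc₁`. -/
noncomputable def TBstar (B : ℝ → ℝ → ℝ) (g : ℝ → ℝ) (m : ℝ → ℝ) (c : ℝ) : ℝ :=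
  ∫ c₁ in Ioi (0:ℝ), B c₁ c * m c₁ * g c₁

open Filter

theorem ConvexOn.deriv_mul_sub_le {S : Set ℝ} {f : ℝ → ℝ} {x y : ℝ} (hf : ConvexOn ℝ S f)
    (hx : x ∈ S) (hy : y ∈ S) (hfd : DifferentiableAt ℝ f x) :
    deriv f x * (y - x) ≤ f y - f x := by
  rcases lt_trichotomy x y with hxy | rfl | hxy
  · have := hf.deriv_le_slope hx hy hxy hfd
    rwa [slope_def_field, le_div_iff₀ (sub_pos.2 hxy)] at this
  · simp
  · have := hf.slope_le_deriv hy hx hxy hfd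
    rw [slope_def_field, div_le_iff₀ (sub_pos.2 hxy)] at this
    linarith

theorem Monotone.abs_le_max_of_mem_Icc {f : ℝ → ℝ} (hf : Monotone f) {a b y : ℝ}
    (hy : y ∈ Icc a b) : |f y| ≤ max |f a| |f b| :=
  abs_le_max_abs_abs (hf hy.1) (hf hy.2)

section Balance

variable {α : Type*} [MeasurableSpace α] {μ : Measure α} [SFinite μ]

theorem integral_prod_mul_sub_eq_zero_of_marginals_eq {w : α → α → ℝ} {φ : α → ℝ}
    (h₁ : Integrable (fun p : α × α => w p.1 p.2 * φ p.1) (μ.prod μ))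
    (h₂ : Integrable (fun p : α × α => w p.1 p.2 * φ p.2) (μ.prod μ))
    (hmarg : (fun x => ∫ y, w x y ∂μ) =ᵐ[μ] fun y => ∫ x, w x y ∂μ) :
    ∫ p, w p.1 p.2 * (φ p.2 - φ p.1) ∂μ.prod μ = 0 := by
  simp_rw [mul_sub]
  rw [integral_sub h₂ h₁, sub_eq_zero, integral_prod_symm _ h₂, integral_prod _ h₁]
  simp_rw [integral_mul_const]
  exact integral_congr_ae (hmarg.symm.mul EventuallyEq.rfl)

theorem integral_integral_deriv_mul_sub_nonpos_of_marginals_eq {w : α → α → ℝ}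
    (hw : Integrable (fun p : α × α => w p.1 p.2) (μ.prod μ))
    (hw_nonneg : ∀ᵐ p ∂μ.prod μ, 0 ≤ w p.1 p.2)
    (hmarg : (fun x => ∫ y, w x y ∂μ) =ᵐ[μ] fun y => ∫ x, w x y ∂μ)
    {H : ℝ → ℝ} (hH_conv : ConvexOn ℝ univ H) (hH_diff : Differentiable ℝ H)
    {u : α → ℝ} (hu_meas : Measurable u) (hu_bdd : ∃ C, ∀ x, |u x| ≤ C) :
    ∫ x, ∫ y, w x y * (deriv H (u x) * (u y - u x)) ∂μ ∂μ ≤ 0 := by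
  obtain ⟨C, hC⟩ := hu_bdd
  have hu_mem : ∀ x, u x ∈ Icc (-C) C := fun x => abs_le.1 (hC x)
  obtain ⟨KH, hKH⟩ := isCompact_Icc.exists_bound_of_continuousOn hH_diff.continuous.continuousOn
  have hH'_mono : Monotone (deriv H) :=
    monotoneOn_univ.1 (hH_conv.monotoneOn_deriv fun x _ => hH_diff x)
  have hw_mul : ∀ ψ : α × α → ℝ, Measurable ψ → (∃ K, ∀ p, |ψ p| ≤ K) →
      Integrable (fun p => w p.1 p.2 * ψ p) (μ.prod μ) := fun ψ hψ ⟨K, hK⟩ =>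
    hw.mul_bdd hψ.aestronglyMeasurable (ae_of_all _ hK)
  have hHu_int : ∀ q : α × α → α, Measurable q →
      Integrable (fun p => w p.1 p.2 * H (u (q p))) (μ.prod μ) := fun q hq =>
    hw_mul _ (hH_diff.continuous.measurable.comp (hu_meas.comp hq))
      ⟨KH, fun p => hKH _ (hu_mem _)⟩
  have hF_int : Integrable (fun p : α × α => w p.1 p.2 * (deriv H (u p.1) * (u p.2 - u p.1)))
      (μ.prod μ) := by
    refine hw_mul _ (((measurable_deriv H).comp (hu_meas.comp measurable_fst)).mul
      ((hu_meas.comp measurable_snd).sub (hu_meas.comp measurable_fst)))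
      ⟨max |deriv H (-C)| |deriv H C| * (C + C), fun p => ?_⟩
    rw [abs_mul]
    exact mul_le_mul (hH'_mono.abs_le_max_of_mem_Icc (hu_mem _))
      ((abs_sub _ _).trans (add_le_add (hC _) (hC _))) (abs_nonneg _)
      ((abs_nonneg _).trans (le_max_left _ _))
  calc ∫ x, ∫ y, w x y * (deriv H (u x) * (u y - u x)) ∂μ ∂μ
      = ∫ p, w p.1 p.2 * (deriv H (u p.1) * (u p.2 - u p.1)) ∂μ.prod μ :=
        (integral_prod _ hF_int).symm
    _ ≤ ∫ p, w p.1 p.2 * (H (u p.2) - H (u p.1)) ∂μ.prod μ := by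
        refine integral_mono_ae hF_int
          ((hHu_int _ measurable_snd).sub (hHu_int _ measurable_fst) |>.congr ?_) ?_
        · exact ae_of_all _ fun p => (mul_sub _ _ _).symm
        · filter_upwards [hw_nonneg] with p hp
          exact mul_le_mul_of_nonneg_left
            (hH_conv.deriv_mul_sub_le (mem_univ _) (mem_univ _) (hH_diff _)) hp
    _ = 0 := integral_prod_mul_sub_eq_zero_of_marginals_eq (φ := H ∘ u)
        (hHu_int _ measurable_fst) (hHu_int _ measurable_snd) hmarg

end Balance

theorem integrable_prod_mul_mul_of_bounded {α : Type*} [MeasurableSpace α] {μ : Measure α}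
    [IsFiniteMeasure μ] {B : α → α → ℝ} {m n : α → ℝ}
    (hB_meas : Measurable (fun p : α × α => B p.1 p.2))
    (hB_bdd : ∃ C, ∀ᵐ p ∂μ.prod μ, |B p.1 p.2| ≤ C)
    (hm_meas : Measurable m) (hm_bdd : ∃ C, ∀ᵐ x ∂μ, |m x| ≤ C)
    (hn_meas : Measurable n) (hn_bdd : ∃ C, ∀ᵐ x ∂μ, |n x| ≤ C) :
    Integrable (fun p : α × α => B p.1 p.2 * m p.1 * n p.2) (μ.prod μ) := by
  obtain ⟨CB, hCB⟩ := hB_bdd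
  obtain ⟨Cm, hCm⟩ := hm_bdd
  obtain ⟨Cn, hCn⟩ := hn_bdd
  refine .of_bound ((hB_meas.mul (hm_meas.comp measurable_fst)).mul
    (hn_meas.comp measurable_snd)).aestronglyMeasurable (CB * Cm * Cn) ?_
  filter_upwards [hCB, Measure.quasiMeasurePreserving_fst.ae hCm,
    Measure.quasiMeasurePreserving_snd.ae hCn] with p hB hm hn
  rw [Real.norm_eq_abs, abs_mul, abs_mul]
  have hCB₀ := (abs_nonneg _).trans hB
  have hCm₀ := (abs_nonneg _).trans hm
  exact mul_le_mul (mul_le_mul hB hm (abs_nonneg _) hCB₀) hn (abs_nonneg _)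
    (mul_nonneg hCB₀ hCm₀)

section NetMeasure

variable {g : ℝ → ℝ}

theorem isFiniteMeasure_netMeasure (hg_prob : ∫ c in Ioi (0:ℝ), g c = 1) :
    IsFiniteMeasure (netMeasure g) :=
  isFiniteMeasure_withDensity_ofReal
    (Integrable.of_integral_ne_zero (hg_prob ▸ one_ne_zero)).hasFiniteIntegral

theorem integral_netMeasure (hg_meas : Measurable g) (hg_nonneg : ∀ c, 0 ≤ g c) (f : ℝ → ℝ) :
    ∫ c, f c ∂netMeasure g = ∫ c in Ioi (0:ℝ), f c * g c := by
  rw [netMeasure, integral_withDensity_eq_integral_toReal_smul hg_meas.ennreal_ofReal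
    (ae_of_all _ fun _ => ENNReal.ofReal_lt_top)]
  simp_rw [ENNReal.toReal_ofReal (hg_nonneg _), smul_eq_mul, mul_comm]

theorem integral_netMeasure_eq_TB (hg_meas : Measurable g) (hg_nonneg : ∀ c, 0 ≤ g c)
    (B : ℝ → ℝ → ℝ) (h : ℝ → ℝ) (c : ℝ) :
    ∫ c₁, B c c₁ * h c₁ ∂netMeasure g = TB B g h c :=
  integral_netMeasure hg_meas hg_nonneg _

theorem integral_netMeasure_eq_TBstar (hg_meas : Measurable g) (hg_nonneg : ∀ c, 0 ≤ g c)
    (B : ℝ → ℝ → ℝ) (h : ℝ → ℝ) (c : ℝ) :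
    ∫ c₁, B c₁ c * h c₁ ∂netMeasure g = TBstar B g h c :=
  integral_netMeasure hg_meas hg_nonneg _

theorem marginals_ae_eq_of_eigenfunctions (hg_meas : Measurable g) (hg_nonneg : ∀ c, 0 ≤ g c)
    {B : ℝ → ℝ → ℝ} {n m : ℝ → ℝ}
    (hn_eig : ∀ᵐ c ∂(netMeasure g), GamB B g c * n c = TB B g n c)
    (hm_eig : ∀ᵐ c ∂(netMeasure g), GamB B g c * m c = TBstar B g m c) :
    (fun c => ∫ c₁, B c c₁ * m c * n c₁ ∂netMeasure g)
      =ᵐ[netMeasure g] fun c₁ => ∫ c, B c c₁ * m c * n c₁ ∂netMeasure g := by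
  filter_upwards [hn_eig, hm_eig] with c hnc hmc
  calc ∫ c₁, B c c₁ * m c * n c₁ ∂netMeasure g
      = TB B g n c * m c := by
        simp_rw [mul_right_comm _ (m c)]
        rw [integral_mul_const, integral_netMeasure_eq_TB hg_meas hg_nonneg]
    _ = TBstar B g m c * n c := by rw [← hnc, ← hmc]; ring
    _ = ∫ c₁, B c₁ c * m c₁ * n c ∂netMeasure g := by
        rw [integral_mul_const, integral_netMeasure_eq_TBstar hg_meas hg_nonneg]

end NetMeasure

/-- General Relative Entropy dissipation inequality: for eigenfunctions `n, m` of the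
scattering operator and its adjoint, a convex differentiable `H` and bounded measurable `u`,
the entropy dissipation term `∫∫ B m n₁ H′(u)(u₁ − u) dμ dμ` is nonpositive. -/
theorem general_relative_entropy_dissipation
    (g : ℝ → ℝ) (hg_meas : Measurable g) (hg_nonneg : ∀ c, 0 ≤ g c)
    (hg_prob : ∫ c in Ioi (0:ℝ), g c = 1)
    (B : ℝ → ℝ → ℝ) (hB_meas : Measurable (fun x : ℝ × ℝ => B x.1 x.2))
    (hB_pos : ∀ᵐ x ∂((netMeasure g).prod (netMeasure g)), 0 < B x.1 x.2)
    (hB_bdd : ∃ C : ℝ, ∀ᵐ x ∂((netMeasure g).prod (netMeasure g)), |B x.1 x.2| ≤ C)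
    (n m : ℝ → ℝ) (hn_meas : Measurable n) (hm_meas : Measurable m)
    (hn_bdd : ∃ C : ℝ, ∀ᵐ c ∂(netMeasure g), |n c| ≤ C)
    (hm_bdd : ∃ C : ℝ, ∀ᵐ c ∂(netMeasure g), |m c| ≤ C)
    (hn_nonneg : 0 ≤ᵐ[netMeasure g] n) (hm_nonneg : 0 ≤ᵐ[netMeasure g] m)
    (hn_eig : ∀ᵐ c ∂(netMeasure g), GamB B g c * n c = TB B g n c)
    (hm_eig : ∀ᵐ c ∂(netMeasure g), GamB B g c * m c = TBstar B g m c)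
    (H : ℝ → ℝ) (hH_conv : ConvexOn ℝ Set.univ H) (hH_diff : Differentiable ℝ H)
    (u : ℝ → ℝ) (hu_meas : Measurable u) (hu_bdd : ∃ C : ℝ, ∀ c, |u c| ≤ C) :
    ∫ c, (∫ c₁, B c c₁ * m c * n c₁ * deriv H (u c) * (u c₁ - u c) ∂(netMeasure g))
      ∂(netMeasure g) ≤ 0 := by
  have := isFiniteMeasure_netMeasure hg_prob
  have hw_nonneg : ∀ᵐ p ∂(netMeasure g).prod (netMeasure g), 0 ≤ B p.1 p.2 * m p.1 * n p.2 := by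
    filter_upwards [hB_pos, Measure.quasiMeasurePreserving_fst.ae hm_nonneg,
      Measure.quasiMeasurePreserving_snd.ae hn_nonneg] with p hB hm hn
    exact mul_nonneg (mul_nonneg hB.le hm) hn
  simp only [mul_assoc (B _ _ * m _ * n _)]
  exact integral_integral_deriv_mul_sub_nonpos_of_marginals_eq
    (integrable_prod_mul_mul_of_bounded hB_meas hB_bdd hm_meas hm_bdd hn_meas hn_bdd) hw_nonneg
    (marginals_ae_eq_of_eigenfunctions hg_meas hg_nonneg hn_eig hm_eig) hH_conv hH_diff
    hu_meas hu_bdd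
end
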